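/- arXiv:math/0602021 — 7 statements merged into one kernel-verified Lean document; each statement's English description precedes it below -/
import Mathlib

section
/- Let φ: (M,g) → (N,h) be a smooth map between Riemannian manifolds with tension field τ(φ) and biharmonic stress-energy tensor S₂ defined by S₂(X,Y) = ½|τ(φ)|² g(X,Y) + ⟨dφ, ∇τ(φ)⟩ g(X,Y) − ⟨dφ(X), ∇_Y τ(φ)⟩ − ⟨dφ(Y), ∇_X τ(φ)⟩. Then for every vector field Y on M, (div S₂)(Y) = −⟨τ₂(φ), dφ(Y)⟩, where τ₂(φ) = −Δτ(φ) − trace Rᴺ(dφ, τ(φ))dφ is the bitension field. -/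
open scoped RealInnerProductSpace
noncomputable section

/-- A fixed orthonormal frame of the (model) tangent space of the `m`-dimensional
Riemannian manifold `M`. -/
def onb (m : ℕ) : OrthonormalBasis (Fin m) ℝ (EuclideanSpace ℝ (Fin m)) :=
  EuclideanSpace.basisFun (Fin m) ℝ

/-- The biharmonic stress-energy tensor
`S₂(X,Y) = ½|τ(φ)|² ⟨X,Y⟩ + ⟨dφ,∇τ(φ)⟩ ⟨X,Y⟩ − ⟨dφ(X),∇_Y τ(φ)⟩ − ⟨dφ(Y),∇_X τ(φ)⟩`,
expressed pointwise in terms of the differential `dphi` of `φ`, the tension field `tau`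
and its covariant derivative `Dtau` (the trace `⟨dφ,∇τ(φ)⟩` being computed in an
orthonormal frame). -/
def S2 {m : ℕ} {F : Type*} [NormedAddCommGroup F] [InnerProductSpace ℝ F]
    (dphi : EuclideanSpace ℝ (Fin m) →ₗ[ℝ] F) (tau : F)
    (Dtau : EuclideanSpace ℝ (Fin m) →ₗ[ℝ] F)
    (X Y : EuclideanSpace ℝ (Fin m)) : ℝ :=
  (1 / 2 : ℝ) * ‖tau‖ ^ 2 * ⟪X, Y⟫
    + (∑ i, ⟪dphi (onb m i), Dtau (onb m i)⟫) * ⟪X, Y⟫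
    - ⟪dphi X, Dtau Y⟫ - ⟪dphi Y, Dtau X⟫

/-! Expanding `Σᵢ (∇_{eᵢ} S₂)(eᵢ, Y)` by the Leibniz rule, all terms involving `∇τ(φ)` cancel:
`⟨∇_Y τ, τ⟩` against `⟨trace ∇dφ, ∇_Y τ⟩` since `τ = trace ∇dφ`, and `⟨∇dφ(Y, ·), ∇τ⟩` against
itself by the symmetry of `∇dφ`. What is left is `−⟨trace ∇²τ, dφ(Y)⟩` plus the commutators
`⟨dφ(eⱼ), ∇²τ(Y, eⱼ) − ∇²τ(eⱼ, Y)⟩`, which the Ricci identity and the symmetries of `Rᴺ` turn into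
`⟨Rᴺ(dφ(eⱼ), τ)dφ(eⱼ), dφ(Y)⟩`. -/

namespace OrthonormalBasis

variable {ι E V : Type*} [Fintype ι] [NormedAddCommGroup E] [InnerProductSpace ℝ E]
  (b : OrthonormalBasis ι ℝ E)

theorem sum_inner_smul_apply [AddCommGroup V] [Module ℝ V] (f : E →ₗ[ℝ] V) (x : E) :
    ∑ i, ⟪b i, x⟫ • f (b i) = f x := by
  conv_rhs => rw [← b.sum_repr' x]
  simp only [map_sum, map_smul]

theorem sum_inner_map_left_mul_inner [NormedAddCommGroup V] [InnerProductSpace ℝ V]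
    (f : E →ₗ[ℝ] V) (w : V) (x : E) :
    ∑ i, ⟪f (b i), w⟫ * ⟪b i, x⟫ = ⟪f x, w⟫ := by
  rw [← b.sum_inner_smul_apply f x, sum_inner]
  simp only [real_inner_smul_left, mul_comm]

theorem sum_inner_map_right_mul_inner [NormedAddCommGroup V] [InnerProductSpace ℝ V]
    (f : E →ₗ[ℝ] V) (w : V) (x : E) :
    ∑ i, ⟪w, f (b i)⟫ * ⟪b i, x⟫ = ⟪w, f x⟫ := by
  simpa only [real_inner_comm w] using b.sum_inner_map_left_mul_inner f w x

end OrthonormalBasis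

theorem inner_curvature_rotate {F : Type*} [NormedAddCommGroup F] [InnerProductSpace ℝ F]
    (R : F →ₗ[ℝ] F →ₗ[ℝ] F →ₗ[ℝ] F)
    (hR2 : ∀ u v w z : F, ⟪R u v w, z⟫ = - ⟪R u v z, w⟫)
    (hR3 : ∀ u v w z : F, ⟪R u v w, z⟫ = ⟪R w z u, v⟫) (u v w : F) :
    ⟪R u v w, v⟫ = ⟪R v w v, u⟫ := by
  rw [hR2, hR3, hR2, neg_neg]

theorem sum_DS2_eq_sum_inner_commutator_sub {ι E F : Type*} [Fintype ι]
    [NormedAddCommGroup E] [InnerProductSpace ℝ E] [NormedAddCommGroup F] [InnerProductSpace ℝ F]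
    (b : OrthonormalBasis ι ℝ E) (dphi Dtau : E →ₗ[ℝ] F) (tau : F)
    (Ddphi D2tau : E →ₗ[ℝ] E →ₗ[ℝ] F) (DS2 : E → E → E → ℝ)
    (htau : tau = ∑ i, Ddphi (b i) (b i))
    (hDdphisymm : ∀ X Y, Ddphi X Y = Ddphi Y X)
    (hDS2 : ∀ Z X Y, DS2 Z X Y =
      ⟪Dtau Z, tau⟫ * ⟪X, Y⟫
        + (∑ i, (⟪Ddphi Z (b i), Dtau (b i)⟫ + ⟪dphi (b i), D2tau Z (b i)⟫)) * ⟪X, Y⟫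
        - ⟪Ddphi Z X, Dtau Y⟫ - ⟪dphi X, D2tau Z Y⟫
        - ⟪Ddphi Z Y, Dtau X⟫ - ⟪dphi Y, D2tau Z X⟫) (Y : E) :
    ∑ i, DS2 (b i) (b i) Y =
      ∑ i, (⟪dphi (b i), D2tau Y (b i)⟫ - ⟪dphi (b i), D2tau (b i) Y⟫)
        - ⟪∑ i, D2tau (b i) (b i), dphi Y⟫ := by
  have hDtau : ∑ i, ⟪Dtau (b i), tau⟫ * ⟪b i, Y⟫ = ⟪Dtau Y, tau⟫ :=
    b.sum_inner_map_left_mul_inner Dtau tau Y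
  have hDdphi : ∑ i, ∑ j, ⟪Ddphi (b i) (b j), Dtau (b j)⟫ * ⟪b i, Y⟫ =
      ∑ j, ⟪Ddphi Y (b j), Dtau (b j)⟫ := by
    rw [Finset.sum_comm]
    exact Finset.sum_congr rfl fun j _ =>
      b.sum_inner_map_left_mul_inner (Ddphi.flip (b j)) (Dtau (b j)) Y
  have hD2tau : ∑ i, ∑ j, ⟪dphi (b j), D2tau (b i) (b j)⟫ * ⟪b i, Y⟫ =
      ∑ j, ⟪dphi (b j), D2tau Y (b j)⟫ := by
    rw [Finset.sum_comm]
    exact Finset.sum_congr rfl fun j _ =>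
      b.sum_inner_map_right_mul_inner (D2tau.flip (b j)) (dphi (b j)) Y
  have htrace : ∑ i, ⟪Ddphi (b i) (b i), Dtau Y⟫ = ⟪Dtau Y, tau⟫ := by
    rw [htau, ← sum_inner, real_inner_comm]
  have hswap : ∑ i, ⟪Ddphi (b i) Y, Dtau (b i)⟫ = ∑ i, ⟪Ddphi Y (b i), Dtau (b i)⟫ := by
    simp only [hDdphisymm _ Y]
  have hlaplacian : ∑ i, ⟪dphi Y, D2tau (b i) (b i)⟫ = ⟪∑ i, D2tau (b i) (b i), dphi Y⟫ := by
    rw [real_inner_comm, inner_sum]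
  simp only [hDS2, Finset.sum_mul, add_mul, Finset.sum_add_distrib, Finset.sum_sub_distrib]
  linarith

/-- Everything is expressed at an arbitrary point of `M` in a geodesic orthonormal frame:
`Ddphi = ∇dφ`, `D2tau = ∇²τ(φ)`, `RN` is the curvature of `N`, `DS2 Z X Y = (∇_Z S₂)(X,Y)`
is given by the Leibniz rule, and `−Δτ(φ) = trace ∇²τ(φ)`. -/
theorem stress_energy_divergence_general
    (m : ℕ) (F : Type*) [NormedAddCommGroup F] [InnerProductSpace ℝ F]
    (dphi : EuclideanSpace ℝ (Fin m) →ₗ[ℝ] F)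
    (tau : F)
    (Dtau : EuclideanSpace ℝ (Fin m) →ₗ[ℝ] F)
    (Ddphi : EuclideanSpace ℝ (Fin m) →ₗ[ℝ] EuclideanSpace ℝ (Fin m) →ₗ[ℝ] F)
    (D2tau : EuclideanSpace ℝ (Fin m) →ₗ[ℝ] EuclideanSpace ℝ (Fin m) →ₗ[ℝ] F)
    (RN : F →ₗ[ℝ] F →ₗ[ℝ] F →ₗ[ℝ] F)
    (hR2 : ∀ u v w z : F, ⟪RN u v w, z⟫ = - ⟪RN u v z, w⟫)
    (hR3 : ∀ u v w z : F, ⟪RN u v w, z⟫ = ⟪RN w z u, v⟫)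
    (htau : tau = ∑ i, Ddphi (onb m i) (onb m i))
    (hDdphisymm : ∀ X Y, Ddphi X Y = Ddphi Y X)
    (hRicci : ∀ X Y, D2tau X Y - D2tau Y X = RN (dphi X) (dphi Y) tau)
    (DS2 : EuclideanSpace ℝ (Fin m) → EuclideanSpace ℝ (Fin m) →
      EuclideanSpace ℝ (Fin m) → ℝ)
    (hDS2 : ∀ Z X Y, DS2 Z X Y =
      ⟪Dtau Z, tau⟫ * ⟪X, Y⟫
        + (∑ i, (⟪Ddphi Z (onb m i), Dtau (onb m i)⟫
            + ⟪dphi (onb m i), D2tau Z (onb m i)⟫)) * ⟪X, Y⟫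
        - ⟪Ddphi Z X, Dtau Y⟫ - ⟪dphi X, D2tau Z Y⟫
        - ⟪Ddphi Z Y, Dtau X⟫ - ⟪dphi Y, D2tau Z X⟫) :
    ∀ Y, (∑ i, DS2 (onb m i) (onb m i) Y) =
      - ⟪(∑ i, D2tau (onb m i) (onb m i))
          - ∑ i, RN (dphi (onb m i)) tau (dphi (onb m i)), dphi Y⟫ := by
  intro Y
  have hcurv : ∀ X,
      ⟪dphi X, D2tau Y X⟫ - ⟪dphi X, D2tau X Y⟫ = ⟪RN (dphi X) tau (dphi X), dphi Y⟫ :=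
    fun X => by rw [← inner_sub_right, hRicci, real_inner_comm, inner_curvature_rotate RN hR2 hR3]
  rw [sum_DS2_eq_sum_inner_commutator_sub (onb m) dphi Dtau tau Ddphi D2tau DS2 htau hDdphisymm
    hDS2]
  simp only [hcurv, inner_sub_left, sum_inner]
  ring

/-- Jiang. For any map `φ : (M,g) → (N,h)`, the stress-energy tensor `S₂`
satisfies `(div S₂)(Y) = −⟨τ₂(φ), dφ(Y)⟩`, where `τ₂(φ) = −Δτ(φ) − trace Rᴺ(dφ,τ(φ))dφ`.
Everything is expressed at an arbitrary point of `M` in a geodesic orthonormal frame: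
`Ddphi = ∇dφ`, `D2tau = ∇²τ(φ)`, `RN` is the curvature of `N` (with its standard
symmetries), `DS2 Z X Y = (∇_Z S₂)(X,Y)` is given by the Leibniz rule, and the
divergence of `S₂` is `Σᵢ (∇_{Xᵢ} S₂)(Xᵢ, Y)`; `−Δτ(φ) = trace ∇²τ(φ)`. -/
theorem stress_energy_divergence
    (m : ℕ) (F : Type*) [NormedAddCommGroup F] [InnerProductSpace ℝ F]
    (dphi : EuclideanSpace ℝ (Fin m) →ₗ[ℝ] F)
    (tau : F)
    (Dtau : EuclideanSpace ℝ (Fin m) →ₗ[ℝ] F)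
    (Ddphi : EuclideanSpace ℝ (Fin m) →ₗ[ℝ] EuclideanSpace ℝ (Fin m) →ₗ[ℝ] F)
    (D2tau : EuclideanSpace ℝ (Fin m) →ₗ[ℝ] EuclideanSpace ℝ (Fin m) →ₗ[ℝ] F)
    (RN : F →ₗ[ℝ] F →ₗ[ℝ] F →ₗ[ℝ] F)
    (hR1 : ∀ u v w : F, RN u v w = - RN v u w)
    (hR2 : ∀ u v w z : F, ⟪RN u v w, z⟫ = - ⟪RN u v z, w⟫)
    (hR3 : ∀ u v w z : F, ⟪RN u v w, z⟫ = ⟪RN w z u, v⟫)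
    (htau : tau = ∑ i, Ddphi (onb m i) (onb m i))
    (hDdphisymm : ∀ X Y, Ddphi X Y = Ddphi Y X)
    (hRicci : ∀ X Y, D2tau X Y - D2tau Y X = RN (dphi X) (dphi Y) tau)
    (DS2 : EuclideanSpace ℝ (Fin m) → EuclideanSpace ℝ (Fin m) →
      EuclideanSpace ℝ (Fin m) → ℝ)
    (hDS2 : ∀ Z X Y, DS2 Z X Y =
      ⟪Dtau Z, tau⟫ * ⟪X, Y⟫
        + (∑ i, (⟪Ddphi Z (onb m i), Dtau (onb m i)⟫
            + ⟪dphi (onb m i), D2tau Z (onb m i)⟫)) * ⟪X, Y⟫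
        - ⟪Ddphi Z X, Dtau Y⟫ - ⟪dphi X, D2tau Z Y⟫
        - ⟪Ddphi Z Y, Dtau X⟫ - ⟪dphi Y, D2tau Z X⟫) :
    ∀ Y, (∑ i, DS2 (onb m i) (onb m i) Y) =
      - ⟪(∑ i, D2tau (onb m i) (onb m i))
          - ∑ i, RN (dphi (onb m i)) tau (dphi (onb m i)), dphi Y⟫ :=
  stress_energy_divergence_general m F dphi tau Dtau Ddphi D2tau RN hR2 hR3 htau hDdphisymm hRicci
    DS2 hDS2

end
end

section
/- Let φ: (M²,g) → (N,h) be a smooth map from a Riemannian surface. If the biharmonic stress-energy tensor S₂ vanishes identically, then φ is harmonic (τ(φ) = 0). Indeed, on a 2-dimensional domain, trace S₂ = |τ(φ)|². -/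
open scoped RealInnerProductSpace
noncomputable section

section

variable {F : Type*} [NormedAddCommGroup F] [InnerProductSpace ℝ F]

theorem sum_S2_onb {m : ℕ} (dphi : EuclideanSpace ℝ (Fin m) →ₗ[ℝ] F) (tau : F)
    (Dtau : EuclideanSpace ℝ (Fin m) →ₗ[ℝ] F) :
    ∑ i, S2 dphi tau Dtau (onb m i) (onb m i) =
      m / 2 * ‖tau‖ ^ 2 + (m - 2) * ∑ i, ⟪dphi (onb m i), Dtau (onb m i)⟫ := by
  have h_unit (i : Fin m) : ⟪onb m i, onb m i⟫ = (1 : ℝ) := by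
    rw [real_inner_self_eq_norm_sq, (onb m).orthonormal.1 i, one_pow]
  simp only [S2, h_unit, mul_one, Finset.sum_sub_distrib, Finset.sum_add_distrib,
    Finset.sum_const, Finset.card_univ, Fintype.card_fin, nsmul_eq_mul]
  ring

theorem sum_S2_onb_two (dphi : EuclideanSpace ℝ (Fin 2) →ₗ[ℝ] F) (tau : F)
    (Dtau : EuclideanSpace ℝ (Fin 2) →ₗ[ℝ] F) :
    ∑ i, S2 dphi tau Dtau (onb 2 i) (onb 2 i) = ‖tau‖ ^ 2 := by
  rw [sum_S2_onb]
  norm_num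

theorem eq_zero_of_S2_eq_zero (dphi : EuclideanSpace ℝ (Fin 2) →ₗ[ℝ] F) (tau : F)
    (Dtau : EuclideanSpace ℝ (Fin 2) →ₗ[ℝ] F) (h : ∀ X Y, S2 dphi tau Dtau X Y = 0) :
    tau = 0 := by
  have h_norm_sq : ‖tau‖ ^ 2 = 0 := by
    simp only [← sum_S2_onb_two dphi tau Dtau, h, Finset.sum_const_zero]
  simpa using h_norm_sq

end

/-- For a map `φ : (M²,g) → (N,h)` from a surface, the trace of the
stress-energy tensor is `trace S₂ = |τ(φ)|²`; hence `S₂ = 0` implies that `φ` is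
harmonic (`τ(φ) = 0`). -/
theorem surface_S2_zero_harmonic
    (M : Type*) (F : Type*) [NormedAddCommGroup F] [InnerProductSpace ℝ F]
    (dphi : M → EuclideanSpace ℝ (Fin 2) →ₗ[ℝ] F)
    (tau : M → F)
    (Dtau : M → EuclideanSpace ℝ (Fin 2) →ₗ[ℝ] F) :
    (∀ p, ∑ i, S2 (dphi p) (tau p) (Dtau p) (onb 2 i) (onb 2 i) = ‖tau p‖ ^ 2) ∧
    ((∀ p X Y, S2 (dphi p) (tau p) (Dtau p) X Y = 0) → ∀ p, tau p = 0) :=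
  ⟨fun p => sum_S2_onb_two (dphi p) (tau p) (Dtau p),
    fun h p => eq_zero_of_S2_eq_zero (dphi p) (tau p) (Dtau p) (h p)⟩

end
end

section
/- A non-minimal Riemannian immersion φ: (M⁴,g) → (N,h) from a 4-dimensional manifold satisfies S₂ = 0 if and only if φ is pseudo-umbilical, i.e. ⟨B(X,Y), τ(φ)⟩ = (1/4)|τ(φ)|²⟨X,Y⟩ for all X, Y. -/
/-!
Along a Riemannian immersion the tangential part of `∇τ(φ)` is `⟨∇_X τ(φ), dφ(Y)⟩ = −⟨τ(φ), B(X,Y)⟩`,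
so its trace is `−|τ(φ)|²` and `S₂ = −½|τ(φ)|² g + 2⟨τ(φ), B⟩`. Hence `S₂ = 0` says exactly
`⟨B, τ(φ)⟩ = ¼|τ(φ)|² g`, which is pseudo-umbilicity precisely when `m = 4`.
-/

open scoped RealInnerProductSpace
noncomputable section

section StressEnergy

variable {m : ℕ} {F : Type*} [NormedAddCommGroup F] [InnerProductSpace ℝ F]
  {dphi : EuclideanSpace ℝ (Fin m) →ₗ[ℝ] F}
  {B : EuclideanSpace ℝ (Fin m) →ₗ[ℝ] EuclideanSpace ℝ (Fin m) →ₗ[ℝ] F}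
  {tau : F} {Dtau : EuclideanSpace ℝ (Fin m) →ₗ[ℝ] F}

theorem inner_dphi_Dtau (hDtau : ∀ X Y, ⟪Dtau X, dphi Y⟫ = -⟪tau, B X Y⟫)
    (X Y : EuclideanSpace ℝ (Fin m)) : ⟪dphi X, Dtau Y⟫ = -⟪tau, B Y X⟫ := by
  rw [real_inner_comm, hDtau]

theorem sum_inner_dphi_Dtau_onb (htau : tau = ∑ i, B (onb m i) (onb m i))
    (hDtau : ∀ X Y, ⟪Dtau X, dphi Y⟫ = -⟪tau, B X Y⟫) :
    ∑ i, ⟪dphi (onb m i), Dtau (onb m i)⟫ = -‖tau‖ ^ 2 :=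
  calc ∑ i, ⟪dphi (onb m i), Dtau (onb m i)⟫
      = -⟪tau, ∑ i, B (onb m i) (onb m i)⟫ := by
        simp only [inner_dphi_Dtau hDtau, inner_sum, Finset.sum_neg_distrib]
    _ = -‖tau‖ ^ 2 := by rw [← htau, real_inner_self_eq_norm_sq]

theorem S2_eq (hBsymm : ∀ X Y, B X Y = B Y X) (htau : tau = ∑ i, B (onb m i) (onb m i))
    (hDtau : ∀ X Y, ⟪Dtau X, dphi Y⟫ = -⟪tau, B X Y⟫) (X Y : EuclideanSpace ℝ (Fin m)) :
    S2 dphi tau Dtau X Y = -(1 / 2 : ℝ) * ‖tau‖ ^ 2 * ⟪X, Y⟫ + 2 * ⟪B X Y, tau⟫ := by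
  rw [S2, sum_inner_dphi_Dtau_onb htau hDtau, inner_dphi_Dtau hDtau, inner_dphi_Dtau hDtau,
    hBsymm Y X, real_inner_comm tau]
  ring

theorem S2_eq_zero_iff (hBsymm : ∀ X Y, B X Y = B Y X)
    (htau : tau = ∑ i, B (onb m i) (onb m i))
    (hDtau : ∀ X Y, ⟪Dtau X, dphi Y⟫ = -⟪tau, B X Y⟫) (X Y : EuclideanSpace ℝ (Fin m)) :
    S2 dphi tau Dtau X Y = 0 ↔ ⟪B X Y, tau⟫ = (1 / 4 : ℝ) * ‖tau‖ ^ 2 * ⟪X, Y⟫ := by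
  rw [S2_eq hBsymm htau hDtau]
  constructor <;> intro h <;> linarith

end StressEnergy

theorem dim_four_S2_zero_iff_pseudo_umbilical_general
    (M : Type*) (F : Type*) [NormedAddCommGroup F] [InnerProductSpace ℝ F]
    (dphi : M → EuclideanSpace ℝ (Fin 4) →ₗ[ℝ] F)
    (B : M → EuclideanSpace ℝ (Fin 4) →ₗ[ℝ] EuclideanSpace ℝ (Fin 4) →ₗ[ℝ] F)
    (tau : M → F)
    (Dtau : M → EuclideanSpace ℝ (Fin 4) →ₗ[ℝ] F)
    (hBsymm : ∀ p X Y, B p X Y = B p Y X)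
    (htau : ∀ p, tau p = ∑ i, B p (onb 4 i) (onb 4 i))
    (hDtau : ∀ p X Y, ⟪Dtau p X, dphi p Y⟫ = -⟪tau p, B p X Y⟫) :
    (∀ p X Y, S2 (dphi p) (tau p) (Dtau p) X Y = 0) ↔
      (∀ p X Y, ⟪B p X Y, tau p⟫ = (1 / 4 : ℝ) * ‖tau p‖ ^ 2 * ⟪X, Y⟫) :=
  forall_congr' fun p => forall₂_congr fun X Y =>
    S2_eq_zero_iff (hBsymm p) (htau p) (hDtau p) X Y

/-- Jiang. A non-minimal Riemannian immersion `φ : (M⁴,g) → (N,h)`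
satisfies `S₂ = 0` if and only if it is pseudo-umbilical, i.e.
`⟨B(X,Y), τ(φ)⟩ = (1/4)|τ(φ)|²⟨X,Y⟩` for all `X, Y`. -/
theorem dim_four_S2_zero_iff_pseudo_umbilical
    (M : Type*) (F : Type*) [NormedAddCommGroup F] [InnerProductSpace ℝ F]
    (dphi : M → EuclideanSpace ℝ (Fin 4) →ₗ[ℝ] F)
    (B : M → EuclideanSpace ℝ (Fin 4) →ₗ[ℝ] EuclideanSpace ℝ (Fin 4) →ₗ[ℝ] F)
    (tau : M → F)
    (Dtau : M → EuclideanSpace ℝ (Fin 4) →ₗ[ℝ] F)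
    (hiso : ∀ p X Y, ⟪dphi p X, dphi p Y⟫ = ⟪X, Y⟫)
    (hBsymm : ∀ p X Y, B p X Y = B p Y X)
    (hBnormal : ∀ p X Y Z, ⟪B p X Y, dphi p Z⟫ = 0)
    (htau : ∀ p, tau p = ∑ i, B p (onb 4 i) (onb 4 i))
    (hDtau : ∀ p X Y, ⟪Dtau p X, dphi p Y⟫ = -⟪tau p, B p X Y⟫)
    (hnonmin : ∃ p, tau p ≠ 0) :
    (∀ p X Y, S2 (dphi p) (tau p) (Dtau p) X Y = 0) ↔
      (∀ p X Y, ⟪B p X Y, tau p⟫ = (1 / 4 : ℝ) * ‖tau p‖ ^ 2 * ⟪X, Y⟫) :=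
  dim_four_S2_zero_iff_pseudo_umbilical_general M F dphi B tau Dtau hBsymm htau hDtau

end
end

section
/- Let φ: (M,g) → (N,h) be a submersion (not necessarily Riemannian) with M non-compact, whose tension field is basic: τ(φ) = ζ∘φ for some vector field ζ on N. If ζ is a Killing vector field on N with constant norm |ζ|² = c² ≠ 0, then S₂ = (c²/2) g; in particular div S₂ = 0 and φ is a proper (non-harmonic) biharmonic map. -/
/- The Killing equation makes `⟨dφ(X), ∇_Y τ⟩` skew in `X, Y`: the trace term and the two
mixed terms of `S₂` then vanish, leaving `S₂ = ½|τ|² g = (c²/2) g`. A constant multiple of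
the metric is divergence free, so `⟨τ₂, dφ(Y)⟩ = 0` for all `Y`, and surjectivity of `dφ`
gives `τ₂ = 0`; `|τ| = |c| ≠ 0` makes `φ` non-harmonic. -/

open scoped RealInnerProductSpace
noncomputable section

section

variable {E F : Type*} [NormedAddCommGroup F] [InnerProductSpace ℝ F] [AddCommGroup E]
  [Module ℝ E]

theorem inner_comp_add_inner_comp_eq_zero {A : F →ₗ[ℝ] F}
    (hA : ∀ u v, ⟪A u, v⟫ + ⟪A v, u⟫ = 0) (L : E →ₗ[ℝ] F) (X Y : E) :
    ⟪L X, A (L Y)⟫ + ⟪L Y, A (L X)⟫ = 0 := by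
  rw [real_inner_comm, add_comm, real_inner_comm]
  exact hA (L X) (L Y)

theorem eq_zero_of_inner_surjective_eq_zero {L : E →ₗ[ℝ] F} (hL : Function.Surjective L)
    {w : F} (hw : ∀ Y, ⟪w, L Y⟫ = 0) : w = 0 := by
  obtain ⟨Y, hY⟩ := hL w
  simpa [hY] using hw Y

end

theorem S2_eq_of_skew {m : ℕ} {F : Type*} [NormedAddCommGroup F] [InnerProductSpace ℝ F]
    {dphi Dtau : EuclideanSpace ℝ (Fin m) →ₗ[ℝ] F}
    (hskew : ∀ X Y, ⟪dphi X, Dtau Y⟫ + ⟪dphi Y, Dtau X⟫ = 0) (tau : F)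
    (X Y : EuclideanSpace ℝ (Fin m)) :
    S2 dphi tau Dtau X Y = ‖tau‖ ^ 2 / 2 * ⟪X, Y⟫ := by
  have hdiag : ∀ u, ⟪dphi u, Dtau u⟫ = 0 := fun u => by linarith [hskew u u]
  have htrace : ∑ i, ⟪dphi (onb m i), Dtau (onb m i)⟫ = 0 :=
    Finset.sum_eq_zero fun i _ => hdiag _
  rw [S2, htrace, sub_sub, hskew X Y]
  ring

theorem basic_killing_tension_proper_biharmonic_general
    (m : ℕ)
    (M : Type*) [Nonempty M]
    (N : Type*) (F : Type*) [NormedAddCommGroup F] [InnerProductSpace ℝ F]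
    (phi : M → N)
    (dphi : M → EuclideanSpace ℝ (Fin m) →ₗ[ℝ] F)
    (hsubm : ∀ p, Function.Surjective (dphi p))
    (zeta : N → F) (Dzeta : N → F →ₗ[ℝ] F)
    (c : ℝ) (hc : c ≠ 0)
    (hKilling : ∀ q u v, ⟪Dzeta q u, v⟫ + ⟪Dzeta q v, u⟫ = 0)
    (hnorm : ∀ q, ‖zeta q‖ ^ 2 = c ^ 2)
    (tau : M → F) (hbasic : ∀ p, tau p = zeta (phi p))
    (Dtau : M → EuclideanSpace ℝ (Fin m) →ₗ[ℝ] F)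
    (hchain : ∀ p X, Dtau p X = Dzeta (phi p) (dphi p X))
    (tau2 : M → F) (divS2 : M → EuclideanSpace ℝ (Fin m) → ℝ)
    (hbridge : ∀ p Y, divS2 p Y = -⟪tau2 p, dphi p Y⟫)
    (hconstdiv : (∃ a : ℝ, ∀ p X Y, S2 (dphi p) (tau p) (Dtau p) X Y = a * ⟪X, Y⟫) →
      ∀ p Y, divS2 p Y = 0) :
    (∀ p X Y, S2 (dphi p) (tau p) (Dtau p) X Y = c ^ 2 / 2 * ⟪X, Y⟫) ∧
    (∀ p Y, divS2 p Y = 0) ∧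
    (∀ p, tau2 p = 0) ∧
    (∃ p, tau p ≠ 0) := by
  have hnorm_tau : ∀ p, ‖tau p‖ ^ 2 = c ^ 2 := fun p => hbasic p ▸ hnorm (phi p)
  have hS2 : ∀ p X Y, S2 (dphi p) (tau p) (Dtau p) X Y = c ^ 2 / 2 * ⟪X, Y⟫ := by
    intro p X Y
    have hskew : ∀ X Y, ⟪dphi p X, Dtau p Y⟫ + ⟪dphi p Y, Dtau p X⟫ = 0 := fun X Y => by
      simpa only [hchain] using inner_comp_add_inner_comp_eq_zero (hKilling (phi p)) _ X Y
    rw [S2_eq_of_skew hskew, hnorm_tau]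
  have hdiv : ∀ p Y, divS2 p Y = 0 := hconstdiv ⟨c ^ 2 / 2, hS2⟩
  refine ⟨hS2, hdiv, fun p => eq_zero_of_inner_surjective_eq_zero (hsubm p) fun Y => ?_, ?_⟩
  · simpa [hbridge] using hdiv p Y
  · obtain ⟨p⟩ := ‹Nonempty M›
    refine ⟨p, fun h => hc ?_⟩
    simpa [h, eq_comm] using hnorm_tau p

/-- Let `φ : (M,g) → (N,h)` be a submersion, `M` non-compact, with basic
tension field `τ(φ) = ζ∘φ`, where `ζ` is a Killing field on `N` of constant norm
`|ζ|² = c² ≠ 0`. Then `S₂ = (c²/2) g`; in particular `div S₂ = 0` and `φ` is a proper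
(non-harmonic) biharmonic map (`τ₂(φ) = 0`, via `div S₂(Y) = −⟨τ₂(φ), dφ(Y)⟩` and the
fact that the divergence of a constant multiple of the metric vanishes). -/
theorem basic_killing_tension_proper_biharmonic
    (m : ℕ)
    (M : Type*) [TopologicalSpace M] [Nonempty M] (hnc : ¬ CompactSpace M)
    (N : Type*) (F : Type*) [NormedAddCommGroup F] [InnerProductSpace ℝ F]
    (phi : M → N)
    (dphi : M → EuclideanSpace ℝ (Fin m) →ₗ[ℝ] F)
    (hsubm : ∀ p, Function.Surjective (dphi p))
    (zeta : N → F) (Dzeta : N → F →ₗ[ℝ] F)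
    (c : ℝ) (hc : c ≠ 0)
    (hKilling : ∀ q u v, ⟪Dzeta q u, v⟫ + ⟪Dzeta q v, u⟫ = 0)
    (hnorm : ∀ q, ‖zeta q‖ ^ 2 = c ^ 2)
    (tau : M → F) (hbasic : ∀ p, tau p = zeta (phi p))
    (Dtau : M → EuclideanSpace ℝ (Fin m) →ₗ[ℝ] F)
    (hchain : ∀ p X, Dtau p X = Dzeta (phi p) (dphi p X))
    (tau2 : M → F) (divS2 : M → EuclideanSpace ℝ (Fin m) → ℝ)
    (hbridge : ∀ p Y, divS2 p Y = -⟪tau2 p, dphi p Y⟫)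
    (hconstdiv : (∃ a : ℝ, ∀ p X Y, S2 (dphi p) (tau p) (Dtau p) X Y = a * ⟪X, Y⟫) →
      ∀ p Y, divS2 p Y = 0) :
    (∀ p X Y, S2 (dphi p) (tau p) (Dtau p) X Y = c ^ 2 / 2 * ⟪X, Y⟫) ∧
    (∀ p Y, divS2 p Y = 0) ∧
    (∀ p, tau2 p = 0) ∧
    (∃ p, tau p ≠ 0) :=
  basic_killing_tension_proper_biharmonic_general m M N F phi dphi hsubm zeta Dzeta c hc hKilling
    hnorm tau hbasic Dtau hchain tau2 divS2 hbridge hconstdiv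
end
end

section
/- Let φ: (M⁴,g) → (N,h), M compact, with S₂ = 0, and suppose there exists ρ ∈ C^∞(M) such that φ: (M⁴, e^{2ρ}g) → (N,h) is harmonic. Then φ: (M,g) → (N,h) is harmonic. Moreover, if rank φ = 4 everywhere, ρ is constant. (Key computation: τ(φ) with respect to g equals −2dφ(grad_g ρ); plugging X = Y = grad_g ρ into the S₂ = 0 identity gives ½|τ(φ)|²|grad_g ρ|² = ½ grad_g ρ(|τ(φ)|²), which at a maximum point of |τ(φ)|² forces |τ(φ)|² = 0.) -/
/-!
With `τ(φ) = −2 dφ(grad ρ)`, the identity `S₂(grad ρ, grad ρ) = 0` together with the trace of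
`S₂ = 0` in dimension four becomes `½ grad ρ (|τ(φ)|²) = ½ |τ(φ)|² |grad ρ|²`. At a maximum point
of `|τ(φ)|²` the left side vanishes, so either `τ(φ)` or `grad ρ` (and with it `τ(φ)`) vanishes
there; hence `max |τ(φ)| = 0`. If `dφ` is injective, `dφ(grad ρ) = −½ τ(φ) = 0` forces
`grad ρ = 0`.
-/

open scoped RealInnerProductSpace
noncomputable section

section StressEnergy

variable {m : ℕ} {F : Type*} [NormedAddCommGroup F] [InnerProductSpace ℝ F]
  (dphi : EuclideanSpace ℝ (Fin m) →ₗ[ℝ] F) (tau : F)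
  (Dtau : EuclideanSpace ℝ (Fin m) →ₗ[ℝ] F)

theorem sum_S2_onb_self :
    ∑ i, S2 dphi tau Dtau (onb m i) (onb m i)
      = m / 2 * ‖tau‖ ^ 2 + (m - 2) * ∑ i, ⟪dphi (onb m i), Dtau (onb m i)⟫ := by
  simp only [S2, real_inner_self_eq_norm_sq, (onb m).orthonormal.1, Finset.sum_sub_distrib,
    Finset.sum_add_distrib, Finset.sum_const, Finset.card_univ, Fintype.card_fin, nsmul_eq_mul,
    one_pow, mul_one]
  ring

theorem trace_of_S2_eq_zero (hS2 : ∀ X Y, S2 dphi tau Dtau X Y = 0) :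
    (m - 2) * ∑ i, ⟪dphi (onb m i), Dtau (onb m i)⟫ = -(m / 2 * ‖tau‖ ^ 2) := by
  have h := sum_S2_onb_self dphi tau Dtau
  simp only [hS2, Finset.sum_const_zero] at h
  linarith

theorem S2_self_of_dphi_eq {v : EuclideanSpace ℝ (Fin m)} (hv : dphi v = (-(1 / 2) : ℝ) • tau) :
    S2 dphi tau Dtau v v
      = (1 / 2 * ‖tau‖ ^ 2 + ∑ i, ⟪dphi (onb m i), Dtau (onb m i)⟫) * ‖v‖ ^ 2
        + ⟪Dtau v, tau⟫ := by
  rw [S2, hv, real_inner_smul_left, real_inner_self_eq_norm_sq, real_inner_comm tau]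
  ring

end StressEnergy

theorem two_inner_Dtau_tau_of_S2_eq_zero {F : Type*} [NormedAddCommGroup F]
    [InnerProductSpace ℝ F] {dphi Dtau : EuclideanSpace ℝ (Fin 4) →ₗ[ℝ] F} {tau : F}
    (hS2 : ∀ X Y, S2 dphi tau Dtau X Y = 0) {v : EuclideanSpace ℝ (Fin 4)}
    (hv : dphi v = (-(1 / 2) : ℝ) • tau) :
    2 * ⟪Dtau v, tau⟫ = ‖tau‖ ^ 2 * ‖v‖ ^ 2 := by
  have htrace : ∑ i, ⟪dphi (onb 4 i), Dtau (onb 4 i)⟫ = -‖tau‖ ^ 2 := by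
    have h := trace_of_S2_eq_zero dphi tau Dtau hS2
    norm_num at h
    linarith
  have hvv := S2_self_of_dphi_eq dphi tau Dtau hv
  rw [hS2, htrace] at hvv
  linarith

theorem eq_zero_of_eq_zero_at_isMax_norm {M E : Type*} [TopologicalSpace M] [CompactSpace M]
    [Nonempty M] [NormedAddGroup E] {f : M → E} (hf : Continuous fun p => ‖f p‖)
    (hmax : ∀ p₀, (∀ p, ‖f p‖ ≤ ‖f p₀‖) → f p₀ = 0) (p : M) : f p = 0 := by
  obtain ⟨p₀, -, hp₀⟩ := isCompact_univ.exists_isMaxOn Set.univ_nonempty hf.continuousOn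
  have hle : ‖f p‖ ≤ ‖f p₀‖ := hp₀ (Set.mem_univ p)
  rw [hmax p₀ fun q => hp₀ (Set.mem_univ q), norm_zero] at hle
  exact norm_le_zero_iff.1 hle

theorem conformally_harmonic_S2_zero_harmonic_general
    (M : Type*) [TopologicalSpace M] [CompactSpace M] [Nonempty M]
    (F : Type*) [NormedAddCommGroup F] [InnerProductSpace ℝ F]
    (dphi : M → EuclideanSpace ℝ (Fin 4) →ₗ[ℝ] F)
    (tau : M → F)
    (Dtau : M → EuclideanSpace ℝ (Fin 4) →ₗ[ℝ] F)
    (rho : M → ℝ) (gradrho : M → EuclideanSpace ℝ (Fin 4))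
    (dnorm : M → EuclideanSpace ℝ (Fin 4) → ℝ)
    (hS2 : ∀ p X Y, S2 (dphi p) (tau p) (Dtau p) X Y = 0)
    (hconf : ∀ p, tau p = (-2 : ℝ) • dphi p (gradrho p))
    (hcont : Continuous fun p => ‖tau p‖)
    (hdnorm : ∀ p X, dnorm p X = 2 * ⟪Dtau p X, tau p⟫)
    (hcrit : ∀ p₀, (∀ p, ‖tau p‖ ≤ ‖tau p₀‖) → ∀ X, dnorm p₀ X = 0)
    (hgradconst : (∀ p, gradrho p = 0) → ∀ p q, rho p = rho q) :
    (∀ p, tau p = 0) ∧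
    ((∀ p, Function.Injective (dphi p)) → ∀ p q, rho p = rho q) := by
  have hdphi : ∀ p, dphi p (gradrho p) = (-(1 / 2) : ℝ) • tau p := fun p => by
    rw [hconf p, smul_smul]
    norm_num
  have htau_max : ∀ p₀, (∀ p, ‖tau p‖ ≤ ‖tau p₀‖) → tau p₀ = 0 := by
    intro p₀ hp₀
    have hkey := two_inner_Dtau_tau_of_S2_eq_zero (hS2 p₀) (hdphi p₀)
    rw [← hdnorm, hcrit p₀ hp₀, eq_comm, mul_eq_zero, pow_eq_zero_iff two_ne_zero,
      pow_eq_zero_iff two_ne_zero, norm_eq_zero, norm_eq_zero] at hkey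
    rcases hkey with htau | hgrad
    · exact htau
    · rw [hconf p₀, hgrad, map_zero, smul_zero]
  have htau := eq_zero_of_eq_zero_at_isMax_norm hcont htau_max
  refine ⟨htau, fun hinj => hgradconst fun p => hinj p ?_⟩
  rw [hdphi p, htau p, smul_zero, map_zero]

/-- Let `φ : (M⁴,g) → (N,h)`, `M` compact, with `S₂ = 0`, and suppose
there is `ρ ∈ C^∞(M)` such that `φ : (M⁴, e^{2ρ}g) → (N,h)` is harmonic — by the
conformal change formula this means `τ(φ) = −2 dφ(grad_g ρ)`. Then `φ : (M,g) → (N,h)`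
is harmonic; moreover if `rank φ = 4` everywhere then `ρ` is constant.
Here `dnorm p X = X(|τ(φ)|²)(p) = 2⟨∇_X τ(φ), τ(φ)⟩` is the differential of `|τ(φ)|²`
(which vanishes at a maximum point), and `grad ρ ≡ 0` forces `ρ` constant since `M` is
connected. -/
theorem conformally_harmonic_S2_zero_harmonic
    (M : Type*) [TopologicalSpace M] [CompactSpace M] [ConnectedSpace M] [Nonempty M]
    (F : Type*) [NormedAddCommGroup F] [InnerProductSpace ℝ F]
    (dphi : M → EuclideanSpace ℝ (Fin 4) →ₗ[ℝ] F)
    (tau : M → F)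
    (Dtau : M → EuclideanSpace ℝ (Fin 4) →ₗ[ℝ] F)
    (rho : M → ℝ) (gradrho : M → EuclideanSpace ℝ (Fin 4))
    (dnorm : M → EuclideanSpace ℝ (Fin 4) → ℝ)
    (hS2 : ∀ p X Y, S2 (dphi p) (tau p) (Dtau p) X Y = 0)
    (hconf : ∀ p, tau p = (-2 : ℝ) • dphi p (gradrho p))
    (hcont : Continuous fun p => ‖tau p‖)
    (hdnorm : ∀ p X, dnorm p X = 2 * ⟪Dtau p X, tau p⟫)
    (hcrit : ∀ p₀, (∀ p, ‖tau p‖ ≤ ‖tau p₀‖) → ∀ X, dnorm p₀ X = 0)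
    (hgradconst : (∀ p, gradrho p = 0) → ∀ p q, rho p = rho q) :
    (∀ p, tau p = 0) ∧
    ((∀ p, Function.Injective (dphi p)) → ∀ p q, rho p = rho q) :=
  conformally_harmonic_S2_zero_harmonic_general M F dphi tau Dtau rho gradrho dnorm hS2 hconf hcont
    hdnorm hcrit hgradconst

end
end

section
/- A non-minimal pseudo-umbilical Riemannian immersion φ: (Mᵐ,g) → (N,h) satisfies S₂ = ((4−m)/(2m))|τ(φ)|² g. Consequently: (a) if m = 4 then S₂ = 0 (hence ∇S₂ = 0); (b) if m ≠ 4 then ∇S₂ = 0 if and only if |τ(φ)| is constant. -/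
open scoped RealInnerProductSpace
noncomputable section

/-- A non-minimal pseudo-umbilical Riemannian immersion
`φ : (Mᵐ,g) → (N,h)` satisfies `S₂ = ((4−m)/(2m))|τ(φ)|² g`. Consequently:
(a) if `m = 4` then `S₂ = 0` (hence `∇S₂ = 0`);
(b) if `m ≠ 4` then `∇S₂ = 0` iff `|τ(φ)|` is constant.
Since `S₂` is a function multiple of the metric, `∇S₂ = dF ⊗ g` where
`dF = ((4−m)/(2m)) d(|τ(φ)|²)`, and `d(|τ(φ)|²) = 0` iff `|τ(φ)|` is constant
(`M` connected). -/
theorem pseudo_umbilical_S2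
    (m : ℕ) (hm : 2 ≤ m)
    (M : Type*) (F : Type*) [NormedAddCommGroup F] [InnerProductSpace ℝ F]
    (dphi : M → EuclideanSpace ℝ (Fin m) →ₗ[ℝ] F)
    (B : M → EuclideanSpace ℝ (Fin m) →ₗ[ℝ] EuclideanSpace ℝ (Fin m) →ₗ[ℝ] F)
    (tau : M → F)
    (Dtau : M → EuclideanSpace ℝ (Fin m) →ₗ[ℝ] F)
    (hiso : ∀ p X Y, ⟪dphi p X, dphi p Y⟫ = ⟪X, Y⟫)
    (htau : ∀ p, tau p = ∑ i, B p (onb m i) (onb m i))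
    (hDtau : ∀ p X Y, ⟪Dtau p X, dphi p Y⟫ = -⟪tau p, B p X Y⟫)
    (hnonmin : ∃ p, tau p ≠ 0)
    (hpu : ∀ p X Y, ⟪B p X Y, tau p⟫ = (1 / (m : ℝ)) * ‖tau p‖ ^ 2 * ⟪X, Y⟫)
    (dnorm : M → EuclideanSpace ℝ (Fin m) → ℝ)
    (hdnorm_const : (∀ p Z, dnorm p Z = 0) ↔ (∀ p q, ‖tau p‖ = ‖tau q‖))
    (DS2 : M → EuclideanSpace ℝ (Fin m) →
      EuclideanSpace ℝ (Fin m) → EuclideanSpace ℝ (Fin m) → ℝ)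
    (hDS2 : ∀ p Z X Y, DS2 p Z X Y =
      ((4 - (m : ℝ)) / (2 * (m : ℝ))) * dnorm p Z * ⟪X, Y⟫) :
    (∀ p X Y, S2 (dphi p) (tau p) (Dtau p) X Y =
        ((4 - (m : ℝ)) / (2 * (m : ℝ))) * ‖tau p‖ ^ 2 * ⟪X, Y⟫) ∧
    (m = 4 → ∀ p X Y, S2 (dphi p) (tau p) (Dtau p) X Y = 0) ∧
    (m ≠ 4 → ((∀ p Z X Y, DS2 p Z X Y = 0) ↔ (∀ p q, ‖tau p‖ = ‖tau q‖))) := by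
  have hm0 : (m : ℝ) ≠ 0 := by
    have : m ≠ 0 := by omega
    exact_mod_cast this
  have main : ∀ p X Y, S2 (dphi p) (tau p) (Dtau p) X Y =
      ((4 - (m : ℝ)) / (2 * (m : ℝ))) * ‖tau p‖ ^ 2 * ⟪X, Y⟫ := by
    intro p X Y
    have hsum : (∑ i, ⟪dphi p (onb m i), Dtau p (onb m i)⟫) = -‖tau p‖ ^ 2 := by
      have h1 : ∀ i : Fin m, ⟪dphi p (onb m i), Dtau p (onb m i)⟫
          = -⟪tau p, B p (onb m i) (onb m i)⟫ := fun i => by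
        rw [real_inner_comm, hDtau]
      calc (∑ i, ⟪dphi p (onb m i), Dtau p (onb m i)⟫)
          = ∑ i, -⟪tau p, B p (onb m i) (onb m i)⟫ :=
            Finset.sum_congr rfl fun i _ => h1 i
        _ = -⟪tau p, ∑ i, B p (onb m i) (onb m i)⟫ := by
            rw [inner_sum, Finset.sum_neg_distrib]
        _ = -‖tau p‖ ^ 2 := by
            rw [← htau, real_inner_self_eq_norm_sq]
    have hXY : ∀ X Y : EuclideanSpace ℝ (Fin m),
        ⟪dphi p X, Dtau p Y⟫ = -((1 / (m : ℝ)) * ‖tau p‖ ^ 2 * ⟪X, Y⟫) := by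
      intro X Y
      rw [real_inner_comm, hDtau, real_inner_comm, hpu, real_inner_comm]
    rw [S2, hsum, hXY, hXY, real_inner_comm Y X]
    field_simp
    ring
  refine ⟨main, fun hm4 p X Y => by subst hm4; rw [main]; norm_num, fun hm4 => ?_⟩
  have hc : ((4 - (m : ℝ)) / (2 * (m : ℝ))) ≠ 0 := by
    have h4 : (4 : ℝ) - (m : ℝ) ≠ 0 := by
      have : (m : ℝ) ≠ 4 := by exact_mod_cast hm4
      intro h; apply this; linarith
    positivity
  constructor
  · intro h
    rw [← hdnorm_const]
    intro p Z
    have e : EuclideanSpace ℝ (Fin m) := onb m ⟨0, by omega⟩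
    have he : ⟪(onb m ⟨0, by omega⟩ : EuclideanSpace ℝ (Fin m)),
        onb m ⟨0, by omega⟩⟫ = (1 : ℝ) := by
      rw [real_inner_self_eq_norm_sq, (onb m).orthonormal.1 ⟨0, by omega⟩]
      norm_num
    have := h p Z (onb m ⟨0, by omega⟩) (onb m ⟨0, by omega⟩)
    rw [hDS2, he, mul_one] at this
    exact (mul_eq_zero.mp this).resolve_left hc
  · intro h p Z X Y
    rw [hDS2, hdnorm_const.mpr h p Z]
    ring

end
end

section
/- Let j: Mᵐ → P^{n−1} be a minimal isometric immersion and i: P^{n−1} → Nⁿ a non-minimal umbilical hypersurface with constant mean curvature. Then the composition i∘j: M → N is a pseudo-umbilical isometric immersion with constant mean curvature. -/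
open scoped RealInnerProductSpace
noncomputable section

/-!
Along the minimal submanifold `M ⊂ P`, the umbilical second fundamental form of `P ⊂ N`
contributes `⟨X,Y⟩ H` to `B_{i∘j}(X,Y)`, while the contribution `di(B_j(X,Y))` of `j` is tangent
to `P`, hence orthogonal to `H`. Minimality of `j` kills the tangent part of the trace, so
`τ(i∘j) = m H`, and pairing `B_{i∘j}(X,Y)` with it gives `m |H|² ⟨X,Y⟩ = (1/m) |τ(i∘j)|² ⟨X,Y⟩`.
-/

namespace SecondFundamentalForm

variable {V E' F : Type*}
  [NormedAddCommGroup V] [InnerProductSpace ℝ V]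
  [NormedAddCommGroup E'] [InnerProductSpace ℝ E']
  [NormedAddCommGroup F] [InnerProductSpace ℝ F]
  (dj : V →ₗ[ℝ] E') (Bj : V →ₗ[ℝ] V →ₗ[ℝ] E') (di : E' →ₗ[ℝ] F) (Bi : E' →ₗ[ℝ] E' →ₗ[ℝ] F)
  {H : F}

def comp (X Y : V) : F :=
  di (Bj X Y) + Bi (dj X) (dj Y)

variable {dj Bj di Bi}

theorem comp_eq_of_umbilical (hjiso : ∀ X Y, ⟪dj X, dj Y⟫ = ⟪X, Y⟫)
    (humbilical : ∀ u v, Bi u v = ⟪u, v⟫ • H) (X Y : V) :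
    comp dj Bj di Bi X Y = di (Bj X Y) + ⟪X, Y⟫ • H := by
  rw [comp, humbilical, hjiso]

theorem inner_comp_mean_curvature (hjiso : ∀ X Y, ⟪dj X, dj Y⟫ = ⟪X, Y⟫)
    (humbilical : ∀ u v, Bi u v = ⟪u, v⟫ • H) (hHnormal : ∀ u, ⟪H, di u⟫ = 0) (X Y : V) :
    ⟪comp dj Bj di Bi X Y, H⟫ = ⟪X, Y⟫ * ‖H‖ ^ 2 := by
  rw [comp_eq_of_umbilical hjiso humbilical, inner_add_left, real_inner_comm, hHnormal,
    real_inner_smul_left, real_inner_self_eq_norm_sq, zero_add]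

variable {ι : Type*} [Fintype ι] (b : OrthonormalBasis ι ℝ V)

theorem sum_comp_self_eq_card_smul (hjiso : ∀ X Y, ⟪dj X, dj Y⟫ = ⟪X, Y⟫)
    (hjminimal : ∑ i, Bj (b i) (b i) = 0) (humbilical : ∀ u v, Bi u v = ⟪u, v⟫ • H) :
    ∑ i, comp dj Bj di Bi (b i) (b i) = Fintype.card ι • H := by
  have hunit : ∀ i, ⟪b i, b i⟫ = 1 := fun i => by
    rw [real_inner_self_eq_norm_sq, b.norm_eq_one, one_pow]
  simp only [comp_eq_of_umbilical hjiso humbilical, hunit, one_smul, Finset.sum_add_distrib,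
    ← map_sum, hjminimal, map_zero, zero_add, Finset.sum_const, Finset.card_univ]

theorem comp_isPseudoUmbilical (hjiso : ∀ X Y, ⟪dj X, dj Y⟫ = ⟪X, Y⟫)
    (hjminimal : ∑ i, Bj (b i) (b i) = 0) (humbilical : ∀ u v, Bi u v = ⟪u, v⟫ • H)
    (hHnormal : ∀ u, ⟪H, di u⟫ = 0) (X Y : V) :
    ⟪comp dj Bj di Bi X Y, ∑ i, comp dj Bj di Bi (b i) (b i)⟫ =
      1 / (Fintype.card ι : ℝ) * ‖∑ i, comp dj Bj di Bi (b i) (b i)‖ ^ 2 * ⟪X, Y⟫ := by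
  rw [sum_comp_self_eq_card_smul b hjiso hjminimal humbilical, ← Nat.cast_smul_eq_nsmul ℝ,
    real_inner_smul_right, inner_comp_mean_curvature hjiso humbilical hHnormal, norm_smul,
    Real.norm_natCast]
  rcases eq_or_ne (Fintype.card ι : ℝ) 0 with hcard | hcard
  · simp [hcard]
  · field_simp

end SecondFundamentalForm

open SecondFundamentalForm in
theorem composition_pseudo_umbilical_general
    (m : ℕ)
    (M : Type*) (E' : Type*) (F : Type*)
    [NormedAddCommGroup E'] [InnerProductSpace ℝ E']
    [NormedAddCommGroup F] [InnerProductSpace ℝ F]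
    (dj : M → EuclideanSpace ℝ (Fin m) →ₗ[ℝ] E')
    (Bj : M → EuclideanSpace ℝ (Fin m) →ₗ[ℝ] EuclideanSpace ℝ (Fin m) →ₗ[ℝ] E')
    (di : M → E' →ₗ[ℝ] F)
    (Bi : M → E' →ₗ[ℝ] E' →ₗ[ℝ] F)
    (Hi : M → F)
    (c : ℝ)
    (hjiso : ∀ p X Y, ⟪dj p X, dj p Y⟫ = ⟪X, Y⟫)
    (hjminimal : ∀ p, ∑ i, Bj p (onb m i) (onb m i) = 0)
    (hiiso : ∀ p (u v : E'), ⟪di p u, di p v⟫ = ⟪u, v⟫)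
    (humbilical : ∀ p (u v : E'), Bi p u v = ⟪u, v⟫ • Hi p)
    (hHnormal : ∀ p (u : E'), ⟪Hi p, di p u⟫ = 0)
    (hH : ∀ p, ‖Hi p‖ = c) :
    -- `i∘j` is an isometric immersion:
    (∀ p X Y, ⟪di p (dj p X), di p (dj p Y)⟫ = ⟪X, Y⟫) ∧
    -- `i∘j` is pseudo-umbilical:
    (∀ p X Y,
      ⟪di p (Bj p X Y) + Bi p (dj p X) (dj p Y),
        ∑ i, (di p (Bj p (onb m i) (onb m i))
          + Bi p (dj p (onb m i)) (dj p (onb m i)))⟫ =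
      (1 / (m : ℝ)) *
        ‖∑ i, (di p (Bj p (onb m i) (onb m i))
          + Bi p (dj p (onb m i)) (dj p (onb m i)))‖ ^ 2 * ⟪X, Y⟫) ∧
    -- `i∘j` has constant mean curvature:
    (∀ p q,
      ‖∑ i, (di p (Bj p (onb m i) (onb m i))
          + Bi p (dj p (onb m i)) (dj p (onb m i)))‖ =
      ‖∑ i, (di q (Bj q (onb m i) (onb m i))
          + Bi q (dj q (onb m i)) (dj q (onb m i)))‖) := by
  have htension : ∀ p, ∑ i, comp (dj p) (Bj p) (di p) (Bi p) (onb m i) (onb m i) = m • Hi p :=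
    fun p => by
      rw [sum_comp_self_eq_card_smul _ (hjiso p) (hjminimal p) (humbilical p), Fintype.card_fin]
  refine ⟨fun p X Y => by rw [hiiso, hjiso], fun p X Y => ?_, fun p q => ?_⟩
  · have := comp_isPseudoUmbilical (onb m) (hjiso p) (hjminimal p) (humbilical p) (hHnormal p) X Y
    rwa [Fintype.card_fin] at this
  · change ‖∑ i, comp (dj p) (Bj p) (di p) (Bi p) (onb m i) (onb m i)‖ =
      ‖∑ i, comp (dj q) (Bj q) (di q) (Bi q) (onb m i) (onb m i)‖
    rw [htension, htension, RCLike.norm_nsmul ℝ, RCLike.norm_nsmul ℝ, hH, hH]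

/-- Let `j : Mᵐ → P^{n−1}` be a minimal isometric immersion and
`i : P^{n−1} → Nⁿ` a non-minimal umbilical hypersurface with constant mean curvature
(`B_i(u,v) = ⟨u,v⟩ H_i`, `‖H_i‖ = c ≠ 0`). Then `i∘j : M → N` is a pseudo-umbilical
isometric immersion with constant mean curvature. The second fundamental form of the
composition is `B_{i∘j}(X,Y) = di(B_j(X,Y)) + B_i(dj X, dj Y)` and its tension field is
`τ(i∘j) = Σᵢ B_{i∘j}(Xᵢ,Xᵢ)`. -/
theorem composition_pseudo_umbilical
    (m : ℕ)
    (M : Type*) (E' : Type*) (F : Type*)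
    [NormedAddCommGroup E'] [InnerProductSpace ℝ E']
    [NormedAddCommGroup F] [InnerProductSpace ℝ F]
    (dj : M → EuclideanSpace ℝ (Fin m) →ₗ[ℝ] E')
    (Bj : M → EuclideanSpace ℝ (Fin m) →ₗ[ℝ] EuclideanSpace ℝ (Fin m) →ₗ[ℝ] E')
    (di : M → E' →ₗ[ℝ] F)
    (Bi : M → E' →ₗ[ℝ] E' →ₗ[ℝ] F)
    (Hi : M → F)
    (c : ℝ) (hc : c ≠ 0)
    (hjiso : ∀ p X Y, ⟪dj p X, dj p Y⟫ = ⟪X, Y⟫)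
    (hjminimal : ∀ p, ∑ i, Bj p (onb m i) (onb m i) = 0)
    (hiiso : ∀ p (u v : E'), ⟪di p u, di p v⟫ = ⟪u, v⟫)
    (humbilical : ∀ p (u v : E'), Bi p u v = ⟪u, v⟫ • Hi p)
    (hHnormal : ∀ p (u : E'), ⟪Hi p, di p u⟫ = 0)
    (hH : ∀ p, ‖Hi p‖ = c) :
    -- `i∘j` is an isometric immersion:
    (∀ p X Y, ⟪di p (dj p X), di p (dj p Y)⟫ = ⟪X, Y⟫) ∧
    -- `i∘j` is pseudo-umbilical:
    (∀ p X Y,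
      ⟪di p (Bj p X Y) + Bi p (dj p X) (dj p Y),
        ∑ i, (di p (Bj p (onb m i) (onb m i))
          + Bi p (dj p (onb m i)) (dj p (onb m i)))⟫ =
      (1 / (m : ℝ)) *
        ‖∑ i, (di p (Bj p (onb m i) (onb m i))
          + Bi p (dj p (onb m i)) (dj p (onb m i)))‖ ^ 2 * ⟪X, Y⟫) ∧
    -- `i∘j` has constant mean curvature:
    (∀ p q,
      ‖∑ i, (di p (Bj p (onb m i) (onb m i))
          + Bi p (dj p (onb m i)) (dj p (onb m i)))‖ =
      ‖∑ i, (di q (Bj q (onb m i) (onb m i))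
          + Bi q (dj q (onb m i)) (dj q (onb m i)))‖) :=
  composition_pseudo_umbilical_general m M E' F dj Bj di Bi Hi c hjiso hjminimal hiiso humbilical
    hHnormal hH

end
end
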